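/- For every n ≥ 2, the number of congruence classes of matrices in M(2, n, n, 2) equals ⌊n/2⌋ + 1, where two 2×n matrices A, B over ℕ are congruent if there are permutation matrices ρ₁ ∈ Sym(2), ρ₂ ∈ Sym(n) with ρ₁ A ρ₂ = B. -/

import Mathlib

/-!
A matrix in `M(2,n,n,2)` is determined by its top row `f`, whose entries lie in `{0, 1, 2}`.
Counting the entries, `2·#{f = 2} + #{f = 1} = n = #{f = 0} + #{f = 1} + #{f = 2}`, so the
number `k` of twos equals the number of zeros, and `2k ≤ n`. Swapping the rows exchanges twos and
zeros of the top row, so `k` is a congruence invariant; conversely `k` determines the multiset of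
entries of the top row, hence the matrix up to a column permutation. Every `k ≤ ⌊n/2⌋` occurs.
-/

open Finset

section LeTwo

variable {ι : Type*} [Fintype ι] {f : ι → ℕ}

lemma sum_eq_two_mul_card_add_card_of_le_two (hf : ∀ i, f i ≤ 2) :
    ∑ i, f i = 2 * #{i | f i = 2} + #{i | f i = 1} := by
  simp only [card_filter, mul_sum, ← sum_add_distrib]
  refine sum_congr rfl fun i _ => ?_
  have := hf i
  split_ifs <;> omega

lemma card_eq_card_add_card_add_card_of_le_two (hf : ∀ i, f i ≤ 2) :
    Fintype.card ι = #{i | f i = 0} + #{i | f i = 1} + #{i | f i = 2} := by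
  rw [← card_univ, card_eq_sum_ones]
  simp only [card_filter, ← sum_add_distrib]
  refine sum_congr rfl fun i _ => ?_
  have := hf i
  split_ifs <;> omega

end LeTwo

lemma exists_perm_comp_eq_of_card_fiber_eq {ι β : Type*} [Fintype ι] [DecidableEq β]
    {f g : ι → β} (h : ∀ b, #{i | f i = b} = #{i | g i = b}) :
    ∃ σ : Equiv.Perm ι, ∀ i, f (σ i) = g i := by
  have e : ∀ b, {i // g i = b} ≃ {i // f i = b} := fun b =>
    Fintype.equivOfCardEq (by simp only [Fintype.card_subtype, h])
  exact ⟨Equiv.ofFiberEquiv e, Equiv.ofFiberEquiv_map e⟩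

lemma card_filter_comp_perm {ι : Type*} [Fintype ι] (σ : Equiv.Perm ι) (p : ι → Prop)
    [DecidablePred p] : #{i | p (σ i)} = #{i | p i} := by
  simp only [← Fintype.card_subtype]
  exact Fintype.card_congr (σ.subtypeEquiv fun _ => Iff.rfl)

def MatrixCongr {ι κ α : Type*} (A B : Matrix ι κ α) : Prop :=
  ∃ (ρ₁ : Equiv.Perm ι) (ρ₂ : Equiv.Perm κ), ∀ i j, A (ρ₁ i) (ρ₂ j) = B i j

abbrev M2nn2 (n : ℕ) : Type :=
  {M : Matrix (Fin 2) (Fin n) ℕ // (∀ i, ∑ j, M i j = n) ∧ (∀ j, ∑ i, M i j = 2)}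

def twos {ι : Type*} [Fintype ι] (M : Matrix (Fin 2) ι ℕ) : ℕ := #{j | M 0 j = 2}

namespace M2nn2

variable {n : ℕ}

lemma col_add (M : M2nn2 n) (j : Fin n) : M.1 0 j + M.1 1 j = 2 := by
  simpa only [Fin.sum_univ_two] using M.2.2 j

lemma top_le_two (M : M2nn2 n) (j : Fin n) : M.1 0 j ≤ 2 := by
  have := M.col_add j
  omega

lemma sum_top (M : M2nn2 n) : 2 * twos M.1 + #{j | M.1 0 j = 1} = n := by
  rw [twos, ← sum_eq_two_mul_card_add_card_of_le_two M.top_le_two, M.2.1 0]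

lemma card_top_eq_zero (M : M2nn2 n) : #{j | M.1 0 j = 0} = twos M.1 := by
  have hcard := card_eq_card_add_card_add_card_of_le_two M.top_le_two
  have hsum := M.sum_top
  rw [Fintype.card_fin] at hcard
  unfold twos at *
  omega

lemma card_bottom_eq_two (M : M2nn2 n) : #{j | M.1 1 j = 2} = twos M.1 := by
  rw [← card_top_eq_zero]
  congr 1
  refine filter_congr fun j _ => ?_
  have := M.col_add j
  omega

lemma two_mul_twos_le (M : M2nn2 n) : 2 * twos M.1 ≤ n := by
  have := M.sum_top
  omega

lemma twos_eq_of_congr {A B : M2nn2 n} (h : MatrixCongr A.1 B.1) : twos A.1 = twos B.1 := by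
  obtain ⟨ρ₁, ρ₂, hAB⟩ := h
  have hB : twos B.1 = #{j | A.1 (ρ₁ 0) j = 2} := by
    simp only [twos, ← hAB]
    exact card_filter_comp_perm ρ₂ (fun j => A.1 (ρ₁ 0) j = 2)
  rw [hB]
  generalize ρ₁ 0 = i
  fin_cases i
  · rfl
  · exact A.card_bottom_eq_two.symm

lemma card_top_fiber_eq_of_twos_eq {A B : M2nn2 n} (h : twos A.1 = twos B.1) (v : ℕ) :
    #{j | A.1 0 j = v} = #{j | B.1 0 j = v} := by
  obtain rfl | rfl | rfl | hv : v = 0 ∨ v = 1 ∨ v = 2 ∨ 2 < v := by omega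
  · rw [card_top_eq_zero, card_top_eq_zero, h]
  · have := A.sum_top
    have := B.sum_top
    omega
  · exact h
  · have hA : ∀ j, A.1 0 j ≠ v := fun j => by have := A.top_le_two j; omega
    have hB : ∀ j, B.1 0 j ≠ v := fun j => by have := B.top_le_two j; omega
    simp [hA, hB]

lemma congr_of_twos_eq {A B : M2nn2 n} (h : twos A.1 = twos B.1) : MatrixCongr A.1 B.1 := by
  obtain ⟨σ, hσ⟩ := exists_perm_comp_eq_of_card_fiber_eq (card_top_fiber_eq_of_twos_eq h)
  refine ⟨1, σ, Fin.forall_fin_two.mpr ⟨hσ, fun j => ?_⟩⟩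
  have hA := A.col_add (σ j)
  have hB := B.col_add j
  have := hσ j
  simp only [Equiv.Perm.one_apply] at this ⊢
  omega

def ofTopRow (f : Fin n → ℕ) (hf : ∀ j, f j ≤ 2) (hsum : ∑ j, f j = n) : M2nn2 n := by
  refine ⟨Matrix.of ![f, fun j => 2 - f j], ?_, fun j => ?_⟩
  · have hadd : ∑ j, (2 - f j) + ∑ j, f j = 2 * n := by
      rw [← sum_add_distrib]
      simp [tsub_add_cancel_of_le (hf _), mul_comm]
    intro i
    fin_cases i <;> simp <;> omega
  · simp [add_tsub_cancel_of_le (hf j)]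

lemma exists_twos_eq {k : ℕ} (hk : 2 * k ≤ n) : ∃ M : M2nn2 n, twos M.1 = k := by
  set f : Fin n → ℕ := fun j => if (j : ℕ) < k then 2 else if (j : ℕ) < 2 * k then 0 else 1
  have hf : ∀ j, f j ≤ 2 := fun j => by simp only [f]; split_ifs <;> omega
  have htwo : #{j | f j = 2} = k := by
    rw [← min_eq_right (by omega : k ≤ n), ← Fin.card_filter_val_lt]
    congr 1
    refine filter_congr fun j _ => ?_
    grind
  have hone : #{j | f j = 1} = n - 2 * k := by
    have hsplit := card_filter_add_card_filter_not (s := univ)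
      (fun j : Fin n => (j : ℕ) < 2 * k)
    rw [Fin.card_filter_val_lt, card_univ, Fintype.card_fin] at hsplit
    have hone' : #{j | f j = 1} = #{j : Fin n | ¬ (j : ℕ) < 2 * k} := by
      congr 1
      refine filter_congr fun j _ => ?_
      grind
    omega
  have hsum : ∑ j, f j = n := by
    rw [sum_eq_two_mul_card_add_card_of_le_two hf, htwo, hone]
    omega
  exact ⟨ofTopRow f hf hsum, htwo⟩

end M2nn2

theorem stmt_12_general (n : ℕ) :
    Nat.card (Quot (fun (A B : {M : Matrix (Fin 2) (Fin n) ℕ //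
        (∀ i, ∑ j, M i j = n) ∧ (∀ j, ∑ i, M i j = 2)}) =>
      ∃ (ρ₁ : Equiv.Perm (Fin 2)) (ρ₂ : Equiv.Perm (Fin n)),
        ∀ i j, A.1 (ρ₁ i) (ρ₂ j) = B.1 i j)) = n / 2 + 1 := by
  let twosClass : Quot (fun A B : M2nn2 n => MatrixCongr A.1 B.1) → Fin (n / 2 + 1) :=
    Quot.lift (fun M => ⟨twos M.1, by have := M.two_mul_twos_le; omega⟩)
      fun _ _ h => Fin.ext (M2nn2.twos_eq_of_congr h)
  have hbij : Function.Bijective twosClass := by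
    constructor
    · rintro ⟨A⟩ ⟨B⟩ h
      exact Quot.sound (M2nn2.congr_of_twos_eq (Fin.val_eq_of_eq h))
    · intro k
      obtain ⟨M, hM⟩ := M2nn2.exists_twos_eq (n := n) (k := k) (by omega)
      exact ⟨Quot.mk _ M, Fin.ext hM⟩
  exact (Nat.card_eq_of_bijective twosClass hbij).trans (Nat.card_fin _)

theorem stmt_12 (n : ℕ) (hn : 2 ≤ n) :
    Nat.card (Quot (fun (A B : {M : Matrix (Fin 2) (Fin n) ℕ //
        (∀ i, ∑ j, M i j = n) ∧ (∀ j, ∑ i, M i j = 2)}) =>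
      ∃ (ρ₁ : Equiv.Perm (Fin 2)) (ρ₂ : Equiv.Perm (Fin n)),
        ∀ i j, A.1 (ρ₁ i) (ρ₂ j) = B.1 i j)) = n / 2 + 1 :=
  stmt_12_general n
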